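/- Let A, B, X be bounded linear operators on a complex Hilbert space H, let m > 0 be a real number, and suppose X − mI is a positive operator. Then m‖A − B‖ ≤ w(S) ≤ (‖AX − XB‖ + ‖A*X − XB*‖)/2, where S is the operator on H ⊕ H given by the 2×2 operator matrix with zero diagonal entries, (1,2)-entry AX − XB, and (2,1)-entry A*X − XB*, and w denotes the numerical radius. -/

import Mathlib

/-!
The upper bound is Cauchy–Schwarz together with `2‖x‖‖y‖ ≤ ‖x‖² + ‖y‖²`.

For the lower bound, testing `S = [[0, C], [D, 0]]` on `(x, λ y)` with a suitable unimodular `λ`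
gives `‖C + D*‖ ≤ 2 w(S)`. For `C = AX - XB`, `D = A*X - XB*` and self-adjoint `X` this is
`‖TX + XT‖` with `T = A - B`. Finally `‖TX + XT‖ ≥ 2m‖T‖` as soon as `re ⟪X w, w⟫ ≥ m‖w‖²`:
test `(TX + XT) u` against `T u` for unit vectors `u` with `‖T u‖ → ‖T‖`; such `u` are
approximate eigenvectors of `T* T` for the eigenvalue `‖T‖²`.
-/

/-- The numerical radius of a bounded linear operator. -/
noncomputable def numRadius {E : Type*} [NormedAddCommGroup E] [InnerProductSpace ℂ E]
    (T : E →L[ℂ] E) : ℝ :=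
  ⨆ x : {x : E // ‖x‖ = 1}, ‖(inner ℂ (T x.val) x.val : ℂ)‖

/-- The 2×2 operator matrix `[[0, C],[D, 0]]` acting on `H ⊕ H` (as `WithLp 2 (H × H)`)
by `(x, y) ↦ (C y, D x)`. -/
noncomputable def offDiagOp {H : Type*} [NormedAddCommGroup H] [InnerProductSpace ℂ H]
    (C D : H →L[ℂ] H) : WithLp 2 (H × H) →L[ℂ] WithLp 2 (H × H) :=
  ((WithLp.prodContinuousLinearEquiv 2 ℂ H H).symm : (H × H) →L[ℂ] WithLp 2 (H × H)) ∘L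
    ((C ∘L ContinuousLinearMap.snd ℂ H H).prod (D ∘L ContinuousLinearMap.fst ℂ H H)) ∘L
    ((WithLp.prodContinuousLinearEquiv 2 ℂ H H) : WithLp 2 (H × H) →L[ℂ] (H × H))

open ContinuousLinearMap RCLike
open scoped InnerProductSpace ComplexConjugate

section NumRadius

variable {E : Type*} [NormedAddCommGroup E] [InnerProductSpace ℂ E]

lemma numRadius_nonneg (T : E →L[ℂ] E) : 0 ≤ numRadius T :=
  Real.iSup_nonneg fun _ => norm_nonneg _

lemma numRadius_le {T : E →L[ℂ] E} {c : ℝ} (hc : 0 ≤ c)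
    (h : ∀ z, ‖z‖ = 1 → ‖⟪T z, z⟫_ℂ‖ ≤ c) : numRadius T ≤ c :=
  Real.iSup_le (fun z => h z z.2) hc

lemma norm_inner_apply_self_le_numRadius (T : E →L[ℂ] E) (z : E) :
    ‖⟪T z, z⟫_ℂ‖ ≤ numRadius T * ‖z‖ ^ 2 := by
  rcases eq_or_ne z 0 with rfl | hz
  · simp
  set u : E := ((‖z‖⁻¹ : ℝ) : ℂ) • z
  have hu : ‖u‖ = 1 := by
    rw [norm_smul, Complex.norm_real, norm_inv, norm_norm, inv_mul_cancel₀ (norm_ne_zero_iff.2 hz)]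
  have hbdd : BddAbove (Set.range fun v : {v : E // ‖v‖ = 1} => ‖⟪T v, v⟫_ℂ‖) := by
    refine ⟨‖T‖, ?_⟩
    rintro _ ⟨v, rfl⟩
    simpa [v.2] using (norm_inner_le_norm (T v) v).trans
      (mul_le_mul_of_nonneg_right (T.le_opNorm v) (norm_nonneg _))
  have hle : ‖⟪T u, u⟫_ℂ‖ ≤ numRadius T := le_ciSup hbdd ⟨u, hu⟩
  have hzu : z = ((‖z‖ : ℝ) : ℂ) • u := by
    rw [smul_smul, ← Complex.ofReal_mul, mul_inv_cancel₀ (norm_ne_zero_iff.2 hz),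
      Complex.ofReal_one, one_smul]
  have hinner : ⟪T z, z⟫_ℂ = ((‖z‖ ^ 2 : ℝ) : ℂ) * ⟪T u, u⟫_ℂ := by
    conv_lhs => rw [hzu]
    rw [map_smul, inner_smul_left, inner_smul_right, Complex.conj_ofReal]
    push_cast
    ring
  rw [hinner, norm_mul, Complex.norm_real, Real.norm_of_nonneg (by positivity), mul_comm]
  exact mul_le_mul_of_nonneg_right hle (by positivity)

lemma norm_le_two_mul_of_forall_norm_inner_le {T : E →L[ℂ] E} {c : ℝ} (hc : 0 ≤ c)
    (h : ∀ x y, ‖⟪T y, x⟫_ℂ‖ ≤ c * (‖x‖ ^ 2 + ‖y‖ ^ 2)) : ‖T‖ ≤ 2 * c := by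
  refine opNorm_le_bound _ (by positivity) fun y => ?_
  rcases eq_or_ne (T y) 0 with hTy | hTy
  · rw [hTy, norm_zero]; positivity
  have hy : y ≠ 0 := by rintro rfl; simp at hTy
  -- the scalings `x = ‖y‖ • T y` and `‖T y‖ • y` balance the two squares on the right
  have key := h ((‖y‖ : ℂ) • T y) ((‖T y‖ : ℂ) • y)
  rw [map_smul, inner_smul_left, inner_smul_right, inner_self_eq_norm_sq_to_K] at key
  simp only [norm_mul, norm_smul, Complex.norm_real, RCLike.norm_ofReal, Real.norm_eq_abs,
    abs_norm, RCLike.norm_conj, norm_pow] at key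
  have hpos : 0 < ‖y‖ * ‖T y‖ ^ 2 := by positivity
  refine le_of_mul_le_mul_right ?_ hpos
  nlinarith

end NumRadius

lemma exists_norm_eq_one_sq_mul_eq_conj (b : ℂ) : ∃ l : ℂ, ‖l‖ = 1 ∧ l ^ 2 * b = conj b := by
  rcases eq_or_ne b 0 with rfl | hb
  · exact ⟨1, by simp⟩
  have hb' : (‖b‖ : ℂ) ≠ 0 := by exact_mod_cast norm_ne_zero_iff.2 hb
  refine ⟨conj b / ‖b‖, ?_, ?_⟩
  · rw [norm_div, RCLike.norm_conj, Complex.norm_real, norm_norm, div_self (norm_ne_zero_iff.2 hb)]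
  · have hbb : b * conj b = (‖b‖ : ℂ) ^ 2 := RCLike.mul_conj b
    field_simp
    linear_combination conj b * hbb

section OffDiag

variable {H : Type*} [NormedAddCommGroup H] [InnerProductSpace ℂ H]

lemma inner_offDiagOp_apply_self (C D : H →L[ℂ] H) (z : WithLp 2 (H × H)) :
    ⟪offDiagOp C D z, z⟫_ℂ = ⟪C z.snd, z.fst⟫_ℂ + ⟪D z.fst, z.snd⟫_ℂ := rfl

lemma numRadius_offDiagOp_le (C D : H →L[ℂ] H) :
    numRadius (offDiagOp C D) ≤ (‖C‖ + ‖D‖) / 2 := by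
  refine numRadius_le (by positivity) fun z hz => ?_
  have hz2 : ‖z.fst‖ ^ 2 + ‖z.snd‖ ^ 2 = 1 := by
    rw [← WithLp.prod_norm_sq_eq_of_L2, hz, one_pow]
  have hC : ‖⟪C z.snd, z.fst⟫_ℂ‖ ≤ ‖C‖ * (‖z.fst‖ * ‖z.snd‖) := by
    calc _ ≤ ‖C z.snd‖ * ‖z.fst‖ := norm_inner_le_norm _ _
      _ ≤ ‖C‖ * ‖z.snd‖ * ‖z.fst‖ := by gcongr; exact C.le_opNorm _
      _ = _ := by ring
  have hD : ‖⟪D z.fst, z.snd⟫_ℂ‖ ≤ ‖D‖ * (‖z.fst‖ * ‖z.snd‖) := by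
    calc _ ≤ ‖D z.fst‖ * ‖z.snd‖ := norm_inner_le_norm _ _
      _ ≤ ‖D‖ * ‖z.fst‖ * ‖z.snd‖ := by gcongr; exact D.le_opNorm _
      _ = _ := by ring
  have hprod : ‖z.fst‖ * ‖z.snd‖ ≤ 1 / 2 := by nlinarith [sq_nonneg (‖z.fst‖ - ‖z.snd‖)]
  rw [inner_offDiagOp_apply_self]
  calc _ ≤ ‖⟪C z.snd, z.fst⟫_ℂ‖ + ‖⟪D z.fst, z.snd⟫_ℂ‖ := norm_add_le _ _
    _ ≤ (‖C‖ + ‖D‖) * (‖z.fst‖ * ‖z.snd‖) := by linarith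
    _ ≤ (‖C‖ + ‖D‖) * (1 / 2) := by gcongr
    _ = _ := by ring

variable [CompleteSpace H]

lemma norm_inner_add_adjoint_apply_le (C D : H →L[ℂ] H) (x y : H) :
    ‖⟪(C + adjoint D) y, x⟫_ℂ‖ ≤ numRadius (offDiagOp C D) * (‖x‖ ^ 2 + ‖y‖ ^ 2) := by
  set a := ⟪C y, x⟫_ℂ
  set b := ⟪D x, y⟫_ℂ
  obtain ⟨l, hl, hlb⟩ := exists_norm_eq_one_sq_mul_eq_conj b
  -- rotating the second coordinate by `l` turns `a + conj b` into `l * ⟪offDiagOp C D z, z⟫`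
  set z : WithLp 2 (H × H) := WithLp.toLp 2 (x, l • y)
  have hz : ‖z‖ ^ 2 = ‖x‖ ^ 2 + ‖y‖ ^ 2 := by
    rw [WithLp.prod_norm_sq_eq_of_L2]
    simp [z, norm_smul, hl]
  have hSz : ⟪(C + adjoint D) y, x⟫_ℂ = l * ⟪offDiagOp C D z, z⟫_ℂ := by
    have hll : l * conj l = 1 := by rw [RCLike.mul_conj, hl]; norm_num
    rw [inner_offDiagOp_apply_self, add_apply, inner_add_left, adjoint_inner_left,
      ← inner_conj_symm y (D x)]
    simp only [z, WithLp.toLp_fst, WithLp.toLp_snd, map_smul, inner_smul_left, inner_smul_right]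
    linear_combination (-a) * hll - hlb
  rw [hSz, norm_mul, hl, one_mul, ← hz]
  exact norm_inner_apply_self_le_numRadius _ _

lemma norm_add_adjoint_le_two_mul_numRadius (C D : H →L[ℂ] H) :
    ‖C + adjoint D‖ ≤ 2 * numRadius (offDiagOp C D) :=
  norm_le_two_mul_of_forall_norm_inner_le (numRadius_nonneg _) (norm_inner_add_adjoint_apply_le C D)

end OffDiag

lemma mul_norm_sq_le_re_inner_of_isPositive {E : Type*} [NormedAddCommGroup E]
    [InnerProductSpace ℂ E] {X : E →L[ℂ] E} {m : ℝ} (hX : (X - (m : ℂ) • 1).IsPositive) (w : E) :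
    m * ‖w‖ ^ 2 ≤ re ⟪X w, w⟫_ℂ := by
  have h := hX.re_inner_nonneg_left w
  have hm : re ((m : ℂ) * ⟪w, w⟫_ℂ) = m * ‖w‖ ^ 2 := by
    rw [RCLike.re_to_complex, Complex.re_ofReal_mul, ← RCLike.re_to_complex, inner_self_eq_norm_sq]
  rw [sub_apply, smul_apply, one_apply_eq_self, inner_sub_left, inner_smul_left, map_sub,
    Complex.conj_ofReal, hm] at h
  linarith

section Anticommutator

variable {H : Type*} [NormedAddCommGroup H] [InnerProductSpace ℂ H] [CompleteSpace H]

lemma norm_adjoint_apply_apply_sub_sq_le (T : H →L[ℂ] H) (u : H) :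
    ‖adjoint T (T u) - ((‖T‖ ^ 2 : ℝ) : ℂ) • u‖ ^ 2 ≤
      ‖T‖ ^ 2 * (‖T‖ ^ 2 * ‖u‖ ^ 2 - ‖T u‖ ^ 2) := by
  have hre : re ⟪adjoint T (T u), ((‖T‖ ^ 2 : ℝ) : ℂ) • u⟫_ℂ = ‖T‖ ^ 2 * ‖T u‖ ^ 2 := by
    rw [inner_smul_right, adjoint_inner_left, RCLike.re_to_complex, Complex.re_ofReal_mul,
      ← RCLike.re_to_complex, inner_self_eq_norm_sq]
  have hTT : ‖adjoint T (T u)‖ ≤ ‖T‖ * ‖T u‖ := by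
    simpa only [adjoint.norm_map] using (adjoint T).le_opNorm (T u)
  have hTT2 : ‖adjoint T (T u)‖ ^ 2 ≤ (‖T‖ * ‖T u‖) ^ 2 := by gcongr
  have hsmul : ‖((‖T‖ ^ 2 : ℝ) : ℂ) • u‖ = ‖T‖ ^ 2 * ‖u‖ := by
    rw [norm_smul, Complex.norm_real, Real.norm_of_nonneg (by positivity)]
  rw [@norm_sub_sq ℂ, hre, hsmul]
  nlinarith

variable {X : H →L[ℂ] H} {m : ℝ}

lemma sub_le_norm_mul_add_mul_mul_norm (T : H →L[ℂ] H)
    (hX : ∀ w, m * ‖w‖ ^ 2 ≤ re ⟪X w, w⟫_ℂ) {u : H} (hu : ‖u‖ = 1) :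
    m * (‖T‖ ^ 2 + ‖T u‖ ^ 2) - ‖X‖ * √(‖T‖ ^ 2 * (‖T‖ ^ 2 - ‖T u‖ ^ 2)) ≤
      ‖T * X + X * T‖ * ‖T‖ := by
  set r := adjoint T (T u) - ((‖T‖ ^ 2 : ℝ) : ℂ) • u
  have hr : ‖r‖ ≤ √(‖T‖ ^ 2 * (‖T‖ ^ 2 - ‖T u‖ ^ 2)) :=
    Real.le_sqrt_of_sq_le <| by
      simpa only [hu, one_pow, mul_one] using norm_adjoint_apply_apply_sub_sq_le T u
  have hsplit : ⟪(T * X + X * T) u, T u⟫_ℂ =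
      ((‖T‖ ^ 2 : ℝ) : ℂ) * ⟪X u, u⟫_ℂ + ⟪X u, r⟫_ℂ + ⟪X (T u), T u⟫_ℂ := by
    rw [add_apply, mul_apply_eq_comp, mul_apply_eq_comp, inner_add_left,
      ← adjoint_inner_right T (X u),
      show adjoint T (T u) = ((‖T‖ ^ 2 : ℝ) : ℂ) • u + r by simp [r], inner_add_right,
      inner_smul_right]
  have hXr : -(‖X‖ * ‖r‖) ≤ re ⟪X u, r⟫_ℂ := by
    have h := (norm_inner_le_norm (𝕜 := ℂ) (X u) r).trans
      (mul_le_mul_of_nonneg_right (X.le_opNorm u) (norm_nonneg r))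
    rw [hu, mul_one] at h
    linarith [neg_le_of_abs_le ((RCLike.abs_re_le_norm ⟪X u, r⟫_ℂ).trans h)]
  have hlower : m * (‖T‖ ^ 2 + ‖T u‖ ^ 2) - ‖X‖ * ‖r‖ ≤ re ⟪(T * X + X * T) u, T u⟫_ℂ := by
    have hXu := hX u
    rw [hu, one_pow, mul_one] at hXu
    rw [hsplit, map_add, map_add, RCLike.re_to_complex, Complex.re_ofReal_mul,
      ← RCLike.re_to_complex]
    nlinarith [hX (T u)]
  have hupper : re ⟪(T * X + X * T) u, T u⟫_ℂ ≤ ‖T * X + X * T‖ * ‖T‖ := by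
    calc _ ≤ ‖(T * X + X * T) u‖ * ‖T u‖ :=
          (RCLike.re_le_norm _).trans (norm_inner_le_norm _ _)
      _ ≤ ‖T * X + X * T‖ * ‖T‖ := by
        gcongr
        · simpa only [hu, mul_one] using (T * X + X * T).le_opNorm u
        · simpa only [hu, mul_one] using T.le_opNorm u
  nlinarith [mul_le_mul_of_nonneg_left hr (norm_nonneg X)]

lemma two_mul_mul_norm_le_norm_mul_add_mul (T : H →L[ℂ] H)
    (hX : ∀ w, m * ‖w‖ ^ 2 ≤ re ⟪X w, w⟫_ℂ) : 2 * m * ‖T‖ ≤ ‖T * X + X * T‖ := by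
  rcases eq_or_ne T 0 with rfl | hT
  · simp
  obtain ⟨x, hx⟩ : ∃ x, T x ≠ 0 := by
    by_contra! h
    exact hT (ext h)
  have : Nontrivial H := ⟨⟨x, 0, by rintro rfl; simp at hx⟩⟩
  set s := (fun u => ‖T u‖) '' Metric.sphere (0 : H) 1
  set g : ℝ → ℝ := fun c => m * (‖T‖ ^ 2 + c ^ 2) - ‖X‖ * √(‖T‖ ^ 2 * (‖T‖ ^ 2 - c ^ 2))
  have hs : s ⊆ {c | g c ≤ ‖T * X + X * T‖ * ‖T‖} := by
    rintro _ ⟨u, hu, rfl⟩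
    exact sub_le_norm_mul_add_mul_mul_norm T hX (mem_sphere_zero_iff_norm.1 hu)
  have hbdd : BddAbove s := by
    refine ⟨‖T‖, ?_⟩
    rintro _ ⟨u, hu, rfl⟩
    simpa [mem_sphere_zero_iff_norm.1 hu] using T.le_opNorm u
  have hmem : ‖T‖ ∈ closure s := T.sSup_sphere_eq_norm ▸
    csSup_mem_closure ((NormedSpace.sphere_nonempty.2 zero_le_one).image _) hbdd
  have hg : g ‖T‖ ≤ ‖T * X + X * T‖ * ‖T‖ :=
    (isClosed_le (by fun_prop) continuous_const).closure_subset_iff.2 hs hmem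
  simp only [g, sub_self, mul_zero, Real.sqrt_zero] at hg
  have hTpos : 0 < ‖T‖ := norm_pos_iff.2 hT
  nlinarith

end Anticommutator

theorem stmt_11_general {H : Type*} [NormedAddCommGroup H] [InnerProductSpace ℂ H] [CompleteSpace H]
    (A B X : H →L[ℂ] H) (m : ℝ)
    (hX : (X - (m : ℂ) • (1 : H →L[ℂ] H)).IsPositive)
    (S : WithLp 2 (H × H) →L[ℂ] WithLp 2 (H × H))
    (hS : S = offDiagOp (A * X - X * B)
      (ContinuousLinearMap.adjoint A * X - X * ContinuousLinearMap.adjoint B)) :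
    m * ‖A - B‖ ≤ numRadius S ∧
      numRadius S ≤ (‖A * X - X * B‖ +
        ‖ContinuousLinearMap.adjoint A * X - X * ContinuousLinearMap.adjoint B‖) / 2 := by
  subst hS
  refine ⟨?_, numRadius_offDiagOp_le _ _⟩
  have hXsa : IsSelfAdjoint X := by
    have h := hX.isSelfAdjoint.add
      (IsSelfAdjoint.smul (Complex.conj_ofReal m) (IsSelfAdjoint.one (H →L[ℂ] H)))
    rwa [sub_add_cancel] at h
  have hsum : A * X - X * B + adjoint (adjoint A * X - X * adjoint B) =
      (A - B) * X + X * (A - B) := by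
    simp only [← star_eq_adjoint, star_sub, star_mul, star_star, hXsa.star_eq]
    noncomm_ring
  have hlower := two_mul_mul_norm_le_norm_mul_add_mul (A - B)
    (mul_norm_sq_le_re_inner_of_isPositive hX)
  have hupper := norm_add_adjoint_le_two_mul_numRadius (A * X - X * B)
    (adjoint A * X - X * adjoint B)
  rw [hsum] at hupper
  linarith

theorem stmt_11 {H : Type*} [NormedAddCommGroup H] [InnerProductSpace ℂ H] [CompleteSpace H]
    (A B X : H →L[ℂ] H) (m : ℝ) (hm : 0 < m)
    (hX : (X - (m : ℂ) • (1 : H →L[ℂ] H)).IsPositive)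
    (S : WithLp 2 (H × H) →L[ℂ] WithLp 2 (H × H))
    (hS : S = offDiagOp (A * X - X * B)
      (ContinuousLinearMap.adjoint A * X - X * ContinuousLinearMap.adjoint B)) :
    m * ‖A - B‖ ≤ numRadius S ∧
      numRadius S ≤ (‖A * X - X * B‖ +
        ‖ContinuousLinearMap.adjoint A * X - X * ContinuousLinearMap.adjoint B‖) / 2 :=
  stmt_11_general A B X m hX S hS
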